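/- arXiv:2305.15738 — 2 statements merged into one kernel-verified Lean document; each statement's English description precedes it below -/
import Mathlib

section
/- If W is a wall in a graph G and W' is a subwall of W, then the tangle governed by W' is contained in the tangle governed by W: every separation in T_{W'} also belongs to T_W. -/
/-- A separation `(A, B)` of a graph `G`: `A ∪ B = V(G)` and there is no edge between
`A \ B` and `B \ A`.  Its order is `|A ∩ B|`. -/
def IsSeparation {V : Type*} (G : SimpleGraph V) (A B : Set V) : Prop :=
  A ∪ B = Set.univ ∧ ∀ a ∈ A \ B, ∀ b ∈ B \ A, ¬ G.Adj a b

/-- An (abstract) wall of sidelength `k` in `G`, given by its `k` rows and `k` columns: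
each row and each column induces a connected subgraph (a path), the rows are pairwise
disjoint, the columns are pairwise disjoint, and every row meets every column. -/
structure IsWall {V : Type*} (G : SimpleGraph V) (k : ℕ)
    (rows cols : Fin k → Set V) : Prop where
  rows_conn : ∀ i, (G.induce (rows i)).Connected
  cols_conn : ∀ j, (G.induce (cols j)).Connected
  rows_disj : ∀ i i', i ≠ i' → Disjoint (rows i) (rows i')
  cols_disj : ∀ j j', j ≠ j' → Disjoint (cols j) (cols j')
  row_meets_col : ∀ i j, (rows i ∩ cols j).Nonempty

/-- `Γ` contains at least `m` full rows (resp. columns) from the family `rows`. -/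
def ContainsFullRows {V : Type*} {k : ℕ} (rows : Fin k → Set V) (m : ℕ)
    (Γ : Set V) : Prop :=
  m ≤ {i : Fin k | rows i ⊆ Γ}.ncard

/-- Membership in the tangle `T_W` governed by a wall `W` of sidelength `k` (given by its
rows and columns): separations `(A, B)` of order less than `⌈k/3⌉` such that `B \ A`
contains at least `k - ⌈k/3⌉ + 1` full rows and full columns of `W`.
(Note `⌈k/3⌉ = (k + 2) / 3` in natural numbers.) -/
def InWallTangle {V : Type*} (G : SimpleGraph V) (k : ℕ)
    (rows cols : Fin k → Set V) (A B : Set V) : Prop :=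
  IsSeparation G A B ∧ (A ∩ B).ncard < (k + 2) / 3 ∧
    ContainsFullRows rows (k - (k + 2) / 3 + 1) (B \ A) ∧
    ContainsFullRows cols (k - (k + 2) / 3 + 1) (B \ A)

lemma conn_subset_of_sep {V : Type*} (G : SimpleGraph V) {A B C : Set V}
    (hsep : IsSeparation G A B) (hconn : (G.induce C).Connected)
    (hne : (C ∩ (B \ A)).Nonempty) (hdisj : C ∩ (A ∩ B) = ∅) : C ⊆ B \ A := by
  obtain ⟨c0, hc0C, hc0⟩ := hne
  intro c hc
  obtain ⟨w⟩ := hconn.preconnected ⟨c0, hc0C⟩ ⟨c, hc⟩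
  have key : ∀ {u v : C} (_ : (G.induce C).Walk u v), (u : V) ∈ B \ A → (v : V) ∈ B \ A := by
    intro u v w
    induction w with
    | nil => exact id
    | @cons u x v h w ih =>
      intro hu
      apply ih
      have hadj : G.Adj (u : V) (x : V) := h
      have hxuniv : (x : V) ∈ A ∪ B := hsep.1 ▸ Set.mem_univ _
      have hxnotAB : (x : V) ∉ A ∩ B := fun hx =>
        Set.eq_empty_iff_forall_notMem.mp hdisj x ⟨x.2, hx⟩
      rcases hxuniv with hxA | hxB
      · have hxAB : (x : V) ∈ A \ B := ⟨hxA, fun hB => hxnotAB ⟨hxA, hB⟩⟩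
        exact absurd hadj.symm (hsep.2 _ hxAB _ hu)
      · exact ⟨hxB, fun hA => hxnotAB ⟨hA, hxB⟩⟩
  exact key w hc0

/-- Key counting lemma: with the column data of the subwall one gets the full-rows
conclusion for the big wall. -/
lemma key_rows {V : Type*} [Fintype V] (G : SimpleGraph V) {k k' : ℕ}
    (rows cols : Fin k → Set V) (cols' : Fin k' → Set V)
    (hW : IsWall G k rows cols) (hk : k' ≤ k)
    (γ : Fin k' → Fin k) (hγ : Function.Injective γ)
    (hcols : ∀ j, cols' j ⊆ cols (γ j))
    (hcne : ∀ j, (cols' j).Nonempty)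
    (A B : Set V) (hsep : IsSeparation G A B)
    (horder : (A ∩ B).ncard < (k' + 2) / 3)
    (hc' : ContainsFullRows cols' (k' - (k' + 2) / 3 + 1) (B \ A)) :
    ContainsFullRows rows (k - (k + 2) / 3 + 1) (B \ A) := by
  have hk1 : 1 ≤ k' := by
    by_contra hx
    interval_cases k'
    simp at horder
  -- J : columns of W' inside B \ A
  set J : Set (Fin k') := {j | cols' j ⊆ B \ A} with hJ
  have hJcard : k' - (k' + 2) / 3 + 1 ≤ J.ncard := hc'
  -- columns γ j with j ∈ J that meet A ∩ B are few
  set Jbad : Set (Fin k') := {j ∈ J | (cols (γ j) ∩ (A ∩ B)).Nonempty} with hJbad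
  have hVne : Nonempty V := ⟨(hcne ⟨0, hk1⟩).choose⟩
  classical
  have hJbadcard : Jbad.ncard ≤ (A ∩ B).ncard := by
    set f : Fin k' → V := fun j =>
      if h : (cols (γ j) ∩ (A ∩ B)).Nonempty then h.choose else Classical.arbitrary V with hf
    apply Set.ncard_le_ncard_of_injOn f
    · intro j hj
      rw [hf]
      simp only [dif_pos hj.2]
      exact hj.2.choose_spec.2
    · intro j hj j' hj' hfe
      by_contra hne
      have h1 : f j ∈ cols (γ j) := by rw [hf]; simp only [dif_pos hj.2]; exact hj.2.choose_spec.1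
      have h2 : f j' ∈ cols (γ j') := by rw [hf]; simp only [dif_pos hj'.2]; exact hj'.2.choose_spec.1
      exact (hW.cols_disj (γ j) (γ j') (fun he => hne (hγ he))).ne_of_mem h1 h2 (by rw [hfe])

  -- find a good column: j0 ∈ J with cols (γ j0) avoiding A ∩ B
  have hex : ∃ j0 ∈ J, ¬ (cols (γ j0) ∩ (A ∩ B)).Nonempty := by
    by_contra hx
    push_neg at hx
    have hsub : J ⊆ Jbad := fun j hj => ⟨hj, hx j hj⟩
    have := Set.ncard_le_ncard hsub (Set.toFinite _)
    omega
  obtain ⟨j0, hj0J, hj0⟩ := hex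
  -- the full column cols (γ j0) lies in B \ A
  have hcol : cols (γ j0) ⊆ B \ A := by
    apply conn_subset_of_sep G hsep (hW.cols_conn (γ j0))
    · obtain ⟨v, hv⟩ := hcne j0
      exact ⟨v, hcols j0 hv, hj0J hv⟩
    · exact Set.not_nonempty_iff_eq_empty.mp hj0
  -- every row of W meets B \ A
  have hrowmeets : ∀ i : Fin k, (rows i ∩ (B \ A)).Nonempty := by
    intro i
    obtain ⟨v, hv1, hv2⟩ := hW.row_meets_col i (γ j0)
    exact ⟨v, hv1, hcol hv2⟩
  -- rows not fully in B \ A meet A ∩ B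
  set S : Set (Fin k) := {i | rows i ⊆ B \ A} with hS
  have hScompl : ∀ i ∈ Sᶜ, (rows i ∩ (A ∩ B)).Nonempty := by
    intro i hi
    by_contra hx
    exact hi (conn_subset_of_sep G hsep (hW.rows_conn i) (hrowmeets i)
      (Set.not_nonempty_iff_eq_empty.mp hx))
  have hSccard : Sᶜ.ncard ≤ (A ∩ B).ncard := by
    set g : Fin k → V := fun i =>
      if h : (rows i ∩ (A ∩ B)).Nonempty then h.choose else Classical.arbitrary V with hg
    apply Set.ncard_le_ncard_of_injOn g
    · intro i hi
      rw [hg]; simp only [dif_pos (hScompl i hi)]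
      exact (hScompl i hi).choose_spec.2
    · intro i hi i' hi' hge
      by_contra hne
      have h1 : g i ∈ rows i := by
        rw [hg]; simp only [dif_pos (hScompl i hi)]; exact (hScompl i hi).choose_spec.1
      have h2 : g i' ∈ rows i' := by
        rw [hg]; simp only [dif_pos (hScompl i' hi')]; exact (hScompl i' hi').choose_spec.1
      exact (hW.rows_disj i i' hne).ne_of_mem h1 h2 (by rw [hge])

  have htot : S.ncard + Sᶜ.ncard = k := by
    rw [Set.ncard_add_ncard_compl, Nat.card_eq_fintype_card, Fintype.card_fin]
  show k - (k + 2) / 3 + 1 ≤ S.ncard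
  omega

/-- If `W'` is a subwall of a wall `W` in `G`, then the tangle governed by `W'` is
contained in the tangle governed by `W`. -/
theorem subwall_tangle_subset {V : Type*} [Fintype V] (G : SimpleGraph V)
    {k k' : ℕ} (rows cols : Fin k → Set V) (rows' cols' : Fin k' → Set V)
    (hW : IsWall G k rows cols) (hW' : IsWall G k' rows' cols') (hk : k' ≤ k)
    (ρ γ : Fin k' → Fin k) (hρ : Function.Injective ρ) (hγ : Function.Injective γ)
    (hrows : ∀ i, rows' i ⊆ rows (ρ i)) (hcols : ∀ j, cols' j ⊆ cols (γ j))
    (A B : Set V) (h : InWallTangle G k' rows' cols' A B) :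
    InWallTangle G k rows cols A B := by
  obtain ⟨hsep, horder, hr', hc'⟩ := h
  have hk1 : 1 ≤ k' := by
    by_contra hx
    interval_cases k'
    simp at horder
  have hWswap : IsWall G k cols rows :=
    ⟨hW.cols_conn, hW.rows_conn, hW.cols_disj, hW.rows_disj,
      fun i j => Set.inter_comm (cols i) (rows j) ▸ hW.row_meets_col j i⟩
  have hcne : ∀ j, (cols' j).Nonempty := fun j =>
    ((hW'.row_meets_col ⟨0, hk1⟩ j).mono Set.inter_subset_right)
  have hrne : ∀ i, (rows' i).Nonempty := fun i =>
    ((hW'.row_meets_col i ⟨0, hk1⟩).mono Set.inter_subset_left)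
  refine ⟨hsep, lt_of_lt_of_le horder (by omega), ?_, ?_⟩
  · exact key_rows G rows cols cols' hW hk γ hγ hcols hcne A B hsep horder hc'
  · exact key_rows G cols rows rows' hWswap hk ρ hρ hrows hrne A B hsep horder hr'
end

section
/- Let G be a graph, v a vertex of G, and (H, η) an extended strip decomposition of G - v. Suppose P is a path in H of length at least 1 such that every edge e of P is v-safe, meaning there is a path in the induced subgraph G[η(e)] minus N[v] from η(e, x) to η(e, y) where x, y are the endpoints of e. Then there exists an induced path Q in G - N[v] of length at least |V(P)| - 2 that starts in η(e1, p1) where e1 is the first edge of P and p1 its first vertex, and ends in η(e_last, p_last) where e_last is the last edge of P and p_last its last vertex. -/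
/-!
Chain the `v`-safe strip paths of the edges of `P`, joining consecutive ones through the
interfaces at the inner vertices of `P` (which are complete to each other), and take a
shortest path `Q` inside the union `S` of the strips `η(e) - N[v]` of the edges `e` of `P`.
Being shortest within `S`, `Q` is induced. An edge of `G` between the strips of two edges of
`H` forces these edges to share a vertex, so along `Q` the index of the edge of `P` whose strip
contains the current vertex grows by at most one per step; it goes from `0` to
`|E(P)| - 1`, whence the length bound.
-/

/-- A triangle in a graph `H`. -/
def IsTriangle {W : Type*} (H : SimpleGraph W) (x y z : W) : Prop :=
  H.Adj x y ∧ H.Adj y z ∧ H.Adj x z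

/-- An extended strip decomposition of the part `U ⊆ V(G)` of a graph `G`, with host
graph `H`.  `vmap x = η(x)`, `emap x y = η(xy)`, `imap x y = η(xy, x)` and
`tmap x y z = η(xyz)`.  The sets partition `U`, interfaces around a common vertex are
complete to each other, and every edge of `G` inside `U` is of one of the allowed types. -/
structure ExtStripDecomp {V W : Type*} (G : SimpleGraph V) (H : SimpleGraph W)
    (U : Set V) where
  vmap : W → Set V
  emap : W → W → Set V
  imap : W → W → Set V
  tmap : W → W → W → Set V
  emap_symm : ∀ x y, emap x y = emap y x
  tmap_symm₁ : ∀ x y z, tmap x y z = tmap y x z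
  tmap_symm₂ : ∀ x y z, tmap x y z = tmap x z y
  vmap_sub : ∀ x, vmap x ⊆ U
  emap_sub : ∀ x y, emap x y ⊆ U
  tmap_sub : ∀ x y z, tmap x y z ⊆ U
  imap_sub : ∀ x y, imap x y ⊆ emap x y
  emap_empty_of_not_adj : ∀ x y, ¬ H.Adj x y → emap x y = ∅
  tmap_empty_of_not_tri : ∀ x y z, ¬ IsTriangle H x y z → tmap x y z = ∅
  cover : ∀ u ∈ U, (∃ x, u ∈ vmap x) ∨ (∃ x y, u ∈ emap x y) ∨ ∃ x y z, u ∈ tmap x y z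
  vmap_disj : ∀ x x', x ≠ x' → Disjoint (vmap x) (vmap x')
  ve_disj : ∀ x y z, Disjoint (vmap x) (emap y z)
  vt_disj : ∀ x a b c, Disjoint (vmap x) (tmap a b c)
  et_disj : ∀ x y a b c, Disjoint (emap x y) (tmap a b c)
  ee_disj : ∀ x y a b, s(x, y) ≠ s(a, b) → Disjoint (emap x y) (emap a b)
  tt_disj : ∀ x y z a b c, ({x, y, z} : Set W) ≠ {a, b, c} →
    Disjoint (tmap x y z) (tmap a b c)
  interfaces_complete : ∀ x y z, H.Adj x y → H.Adj x z → y ≠ z →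
    ∀ u ∈ imap x y, ∀ v ∈ imap x z, G.Adj u v
  edge_rule : ∀ u v, u ∈ U → v ∈ U → G.Adj u v →
    (∃ x, u ∈ vmap x ∧ v ∈ vmap x) ∨
    (∃ x y, u ∈ emap x y ∧ v ∈ emap x y) ∨
    (∃ x y z, u ∈ tmap x y z ∧ v ∈ tmap x y z) ∨
    (∃ x y z, H.Adj x y ∧ H.Adj x z ∧ u ∈ imap x y ∧ v ∈ imap x z) ∨
    (∃ x y, H.Adj x y ∧
      ((u ∈ imap x y ∧ v ∈ vmap x) ∨ (v ∈ imap x y ∧ u ∈ vmap x))) ∨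
    (∃ x y z, (u ∈ tmap x y z ∧ v ∈ imap x y ∧ v ∈ imap y x) ∨
      (v ∈ tmap x y z ∧ u ∈ imap x y ∧ u ∈ imap y x))

/-- A rigid extended strip decomposition: for every edge `xy` of `H` the sets `η(xy)`,
`η(xy, x)` and `η(xy, y)` are nonempty. -/
def ExtStripDecomp.Rigid {V W : Type*} {G : SimpleGraph V} {H : SimpleGraph W} {U : Set V}
    (D : ExtStripDecomp G H U) : Prop :=
  ∀ x y, H.Adj x y →
    (D.emap x y).Nonempty ∧ (D.imap x y).Nonempty ∧ (D.imap y x).Nonempty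

namespace SimpleGraph.Walk

variable {V : Type*} {G : SimpleGraph V} {u w : V}

lemma not_adj_getVert_of_length_eq_dist (p : G.Walk u w) (hp : p.length = G.dist u w)
    {i j : ℕ} (hij : i + 1 < j) (hj : j ≤ p.length) : ¬ G.Adj (p.getVert i) (p.getVert j) := by
  intro hadj
  have := G.dist_le ((p.take i).append (cons hadj (p.drop j)))
  simp only [length_append, take_length, length_cons, drop_length] at this
  omega

lemma exists_chordless_isPath_of_forall_mem_support {S : Set V} (p : G.Walk u w)
    (hp : ∀ z ∈ p.support, z ∈ S) :
    ∃ q : G.Walk u w, q.IsPath ∧ (∀ z ∈ q.support, z ∈ S) ∧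
      ∀ i j, i + 1 < j → j ≤ q.length → ¬ G.Adj (q.getVert i) (q.getVert j) := by
  obtain ⟨q, hq, hlen⟩ := (p.induce S hp).reachable.exists_path_of_dist
  have hsupp : ∀ z ∈ (q.map (Embedding.induce S).toHom).support, z ∈ S := by
    intro z hz
    rw [support_map, List.mem_map] at hz
    obtain ⟨z', -, rfl⟩ := hz
    exact z'.2
  have hchord : ∀ i j, i + 1 < j → j ≤ (q.map (Embedding.induce S).toHom).length →
      ¬ G.Adj ((q.map (Embedding.induce S).toHom).getVert i)
        ((q.map (Embedding.induce S).toHom).getVert j) := by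
    intro i j hij hj
    rw [getVert_map, getVert_map]
    exact q.not_adj_getVert_of_length_eq_dist hlen hij (by rwa [length_map] at hj)
  exact ⟨_, hq.map Subtype.val_injective, hsupp, hchord⟩

lemma exists_mem_le_add_length {B : ℕ → Set V}
    (hB : ∀ i j, ∀ a ∈ B i, ∀ b ∈ B j, G.Adj a b → j ≤ i + 1) (p : G.Walk u w)
    (hp : ∀ z ∈ p.support, ∃ i, z ∈ B i) {i : ℕ} (hu : u ∈ B i) :
    ∃ j, w ∈ B j ∧ j ≤ i + p.length := by
  induction p generalizing i with
  | nil => exact ⟨i, hu, by simp⟩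
  | cons h p ih =>
    obtain ⟨i', hi'⟩ := hp _ (List.mem_cons_of_mem _ p.start_mem_support)
    have hstep := hB _ _ _ hu _ hi' h
    obtain ⟨j, hj, hle⟩ := ih (fun z hz => hp z (by simp [hz])) hi'
    exact ⟨j, hj, by rw [length_cons]; omega⟩

lemma IsPath.le_succ_of_mem_of_mem {p : G.Walk u w} (hp : p.IsPath) {i j : ℕ} {c : V}
    (hi : i < p.length) (hj : j < p.length) (hci : c ∈ s(p.getVert i, p.getVert (i + 1)))
    (hcj : c ∈ s(p.getVert j, p.getVert (j + 1))) : i ≤ j + 1 := by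
  have inj {m n : ℕ} (hm : m ≤ p.length) (hn : n ≤ p.length)
      (h : p.getVert m = p.getVert n) : m = n := hp.getVert_injOn hm hn h
  rw [Sym2.mem_iff] at hci hcj
  rcases hci with rfl | rfl <;> rcases hcj with h | h <;>
    have := inj (by omega) (by omega) h <;> omega

lemma IsPath.eq_of_sym2_getVert_eq {p : G.Walk u w} (hp : p.IsPath) {i j : ℕ}
    (hi : i < p.length) (hj : j < p.length)
    (h : s(p.getVert i, p.getVert (i + 1)) = s(p.getVert j, p.getVert (j + 1))) : i = j := by
  have inj {m n : ℕ} (hm : m ≤ p.length) (hn : n ≤ p.length)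
      (h : p.getVert m = p.getVert n) : m = n := hp.getVert_injOn hm hn h
  rcases Sym2.eq_iff.mp h with ⟨h1, -⟩ | ⟨h1, h2⟩
  · exact inj (by omega) (by omega) h1
  · have := inj (by omega) (by omega) h1
    have := inj (by omega) (by omega) h2
    omega

end SimpleGraph.Walk

lemma SimpleGraph.exists_walk_of_chain {V : Type*} {G : SimpleGraph V} {S : Set V}
    {A B : ℕ → Set V} {n : ℕ}
    (hwalk : ∀ i < n, ∃ a ∈ A i, ∃ b ∈ B i, ∃ q : G.Walk a b, ∀ z ∈ q.support, z ∈ S)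
    (hlink : ∀ i, i + 1 < n → ∀ b ∈ B i, ∀ a ∈ A (i + 1), G.Adj b a) {m : ℕ} (hm : m < n) :
    ∃ a ∈ A 0, ∃ b ∈ B m, ∃ q : G.Walk a b, ∀ z ∈ q.support, z ∈ S := by
  induction m with
  | zero => exact hwalk 0 hm
  | succ m ih =>
    obtain ⟨a, ha, b, hb, q, hq⟩ := ih (by omega)
    obtain ⟨a', ha', b', hb', q', hq'⟩ := hwalk (m + 1) hm
    refine ⟨a, ha, b', hb', q.append (.cons (hlink m hm b hb a' ha') q'), fun z hz => ?_⟩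
    rw [Walk.mem_support_append_iff, Walk.support_cons, List.mem_cons] at hz
    rcases hz with hz | rfl | hz
    · exact hq z hz
    · exact hq _ q.end_mem_support
    · exact hq' z hz

namespace ExtStripDecomp

variable {V W : Type*} {G : SimpleGraph V} {H : SimpleGraph W} {U : Set V}
  (D : ExtStripDecomp G H U)

lemma adj_of_mem_emap {u : V} {x y : W} (hu : u ∈ D.emap x y) : H.Adj x y := by
  by_contra h
  simp [D.emap_empty_of_not_adj x y h] at hu

lemma sym2_eq_of_mem_emap {u : V} {x y a b : W} (hxy : u ∈ D.emap x y) (hab : u ∈ D.emap a b) :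
    s(x, y) = s(a, b) := by
  by_contra h
  exact Set.disjoint_left.mp (D.ee_disj x y a b h) hxy hab

lemma exists_mem_mem_of_adj_of_mem_emap {u w : V} {x y a b : W} (hu : u ∈ D.emap x y)
    (hw : w ∈ D.emap a b) (hadj : G.Adj u w) : ∃ c, c ∈ s(x, y) ∧ c ∈ s(a, b) := by
  have not_vmap {z : V} {c d : W} (hz : z ∈ D.emap c d) (e : W) : z ∉ D.vmap e :=
    fun he => Set.disjoint_left.mp (D.ve_disj e c d) he hz
  have not_tmap {z : V} {c d : W} (hz : z ∈ D.emap c d) (e f g : W) : z ∉ D.tmap e f g :=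
    Set.disjoint_left.mp (D.et_disj c d e f g) hz
  rcases D.edge_rule u w (D.emap_sub x y hu) (D.emap_sub a b hw) hadj with
    ⟨e, he, -⟩ | ⟨c, d, hu', hw'⟩ | ⟨e, f, g, he, -⟩ | ⟨c, d, d', -, -, hu', hw'⟩ |
      ⟨e, f, -, ⟨-, he⟩ | ⟨-, he⟩⟩ | ⟨e, f, g, ⟨he, -⟩ | ⟨he, -⟩⟩
  · exact absurd he (not_vmap hu e)
  · refine ⟨c, ?_, ?_⟩
    · rw [← D.sym2_eq_of_mem_emap hu' hu]; exact Sym2.mem_mk_left c d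
    · rw [← D.sym2_eq_of_mem_emap hw' hw]; exact Sym2.mem_mk_left c d
  · exact absurd he (not_tmap hu e f g)
  · refine ⟨c, ?_, ?_⟩
    · rw [← D.sym2_eq_of_mem_emap (D.imap_sub c d hu') hu]; exact Sym2.mem_mk_left c d
    · rw [← D.sym2_eq_of_mem_emap (D.imap_sub c d' hw') hw]; exact Sym2.mem_mk_left c d'
  · exact absurd he (not_vmap hw e)
  · exact absurd he (not_vmap hu e)
  · exact absurd he (not_tmap hu e f g)
  · exact absurd he (not_tmap hw e f g)

variable {x y : W} {P : H.Walk x y}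

lemma lt_length_of_mem_emap_getVert {u : V} {i : ℕ}
    (hu : u ∈ D.emap (P.getVert i) (P.getVert (i + 1))) : i < P.length := by
  by_contra! h
  have hadj := D.adj_of_mem_emap hu
  rw [P.getVert_of_length_le h, P.getVert_of_length_le (by omega)] at hadj
  exact hadj.ne rfl

lemma le_succ_of_adj_of_mem_emap_getVert (hP : P.IsPath) {u w : V} {i j : ℕ}
    (hu : u ∈ D.emap (P.getVert i) (P.getVert (i + 1)))
    (hw : w ∈ D.emap (P.getVert j) (P.getVert (j + 1))) (hadj : G.Adj u w) : j ≤ i + 1 := by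
  obtain ⟨c, hci, hcj⟩ := D.exists_mem_mem_of_adj_of_mem_emap hu hw hadj
  exact hP.le_succ_of_mem_of_mem (D.lt_length_of_mem_emap_getVert hw)
    (D.lt_length_of_mem_emap_getVert hu) hcj hci

lemma eq_of_mem_emap_getVert (hP : P.IsPath) {u : V} {i j : ℕ}
    (hi : u ∈ D.emap (P.getVert i) (P.getVert (i + 1)))
    (hj : u ∈ D.emap (P.getVert j) (P.getVert (j + 1))) : i = j :=
  hP.eq_of_sym2_getVert_eq (D.lt_length_of_mem_emap_getVert hi)
    (D.lt_length_of_mem_emap_getVert hj) (D.sym2_eq_of_mem_emap hi hj)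

end ExtStripDecomp

/-- Let `(H, η)` be an extended strip decomposition of `G - v` and `P` a path in `H` of
length at least `1` all of whose edges are `v`-safe (for each edge `xy` of `P` there is a
path inside `G[η(xy)] - N[v]` from `η(xy, x)` to `η(xy, y)`).  Then there is an induced
path `Q` in `G - N[v]` of length at least `|V(P)| - 2` which starts in `η(e₁, p₁)` (the
interface of the first edge of `P` at its first vertex) and ends in `η(e_last, p_last)`. -/
theorem safe_path_lifts_to_induced_path {V W : Type*} (G : SimpleGraph V)
    (H : SimpleGraph W) (v : V) (D : ExtStripDecomp G H {u : V | u ≠ v})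
    {x y : W} (P : H.Walk x y) (hP : P.IsPath) (hlen : 1 ≤ P.length)
    (hsafe : ∀ i, i < P.length →
      ∃ a ∈ D.imap (P.getVert i) (P.getVert (i + 1)),
        ∃ b ∈ D.imap (P.getVert (i + 1)) (P.getVert i),
          ∃ q : G.Walk a b, ∀ u ∈ q.support,
            u ∈ D.emap (P.getVert i) (P.getVert (i + 1)) ∧ u ≠ v ∧ ¬ G.Adj v u) :
    ∃ (a b : V) (q : G.Walk a b), q.IsPath ∧
      (∀ u ∈ q.support, u ≠ v ∧ ¬ G.Adj v u) ∧
      (∀ i j : ℕ, i + 1 < j → j ≤ q.length → ¬ G.Adj (q.getVert i) (q.getVert j)) ∧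
      P.length - 1 ≤ q.length ∧
      a ∈ D.imap x (P.getVert 1) ∧
      b ∈ D.imap y (P.getVert (P.length - 1)) := by
  let S : Set V :=
    {u | u ≠ v ∧ ¬ G.Adj v u ∧ ∃ i, u ∈ D.emap (P.getVert i) (P.getVert (i + 1))}
  have hstrips : ∀ i < P.length, ∃ a ∈ D.imap (P.getVert i) (P.getVert (i + 1)),
      ∃ b ∈ D.imap (P.getVert (i + 1)) (P.getVert i),
        ∃ q : G.Walk a b, ∀ u ∈ q.support, u ∈ S := by
    intro i hi
    obtain ⟨a, ha, b, hb, q, hq⟩ := hsafe i hi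
    exact ⟨a, ha, b, hb, q, fun u hu => ⟨(hq u hu).2.1, (hq u hu).2.2, i, (hq u hu).1⟩⟩
  have hlinks : ∀ i, i + 1 < P.length → ∀ b ∈ D.imap (P.getVert (i + 1)) (P.getVert i),
      ∀ a ∈ D.imap (P.getVert (i + 1)) (P.getVert (i + 1 + 1)), G.Adj b a := by
    intro i hi
    refine D.interfaces_complete _ _ _ (P.adj_getVert_succ (by omega)).symm
      (P.adj_getVert_succ hi) fun h => ?_
    have := hP.getVert_injOn (show i ≤ P.length by omega) (show i + 2 ≤ P.length by omega) h
    omega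
  obtain ⟨a, ha, b, hb, p, hpS⟩ :=
    G.exists_walk_of_chain hstrips hlinks (m := P.length - 1) (by omega)
  obtain ⟨q, hq, hqS, hqchord⟩ := p.exists_chordless_isPath_of_forall_mem_support hpS
  have hend : P.getVert (P.length - 1 + 1) = y := by
    rw [Nat.sub_add_cancel hlen, P.getVert_length]
  obtain ⟨j, hj, hjle⟩ := q.exists_mem_le_add_length
    (fun _ _ _ ha _ hb => D.le_succ_of_adj_of_mem_emap_getVert hP ha hb)
    (fun u hu => (hqS u hu).2.2) (D.imap_sub _ _ ha)
  have hjlast := D.eq_of_mem_emap_getVert hP hj (D.emap_symm _ _ ▸ D.imap_sub _ _ hb)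
  exact ⟨a, b, q, hq, fun u hu => ⟨(hqS u hu).1, (hqS u hu).2.1⟩, hqchord, by omega,
    by simpa using ha, by rwa [hend] at hb⟩
end
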